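/- arXiv:1707.06664 — 4 statements merged into one kernel-verified Lean document; each statement's English description precedes it below -/
import Mathlib

section
/- Let n, D be naturals with 1 ≤ D ≤ n, let Δ > 1 be a real number, let α be a type with a distinguished zero element and decidable equality, let β be any type, and let f : α^n → β be any function, where ‖x‖₀ denotes the number of nonzero entries of x ∈ α^n. Then there exists a decoder g : β → ℝ satisfying ‖x‖₀/Δ ≤ g(f(x)) ≤ Δ·‖x‖₀ for every x ∈ α^n with 1 ≤ ‖x‖₀ ≤ D, if and only if f satisfies: for all v₁, v₂ ∈ α^n with 1 ≤ ‖v₂‖₀ ≤ ‖v₁‖₀ ≤ D, if ‖v₁‖₀ > Δ²·‖v₂‖₀ then f(v₁) ≠ f(v₂). -/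
/-- The sparsity (number of nonzero entries) of a vector `x : Fin n → α`. -/
def sparsity {α : Type*} [Zero α] [DecidableEq α] {n : ℕ} (x : Fin n → α) : ℕ :=
  (Finset.univ.filter (fun i => x i ≠ 0)).card

/-- There exists a decoder `g` producing a `Δ`-approximation of the sparsity of every
`x` with `1 ≤ ‖x‖₀ ≤ D` from the measurement `f x`, if and only if `f` separates any two
vectors of weight at most `D` whose sparsities differ by more than a `Δ²` factor. -/
theorem sparsity_estimation_iff (n D : ℕ) (hD1 : 1 ≤ D) (hDn : D ≤ n)
    (Δ : ℝ) (hΔ : 1 < Δ)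
    (α : Type*) [Zero α] [DecidableEq α] (β : Type*)
    (f : (Fin n → α) → β) :
    (∃ g : β → ℝ, ∀ x : Fin n → α, 1 ≤ sparsity x → sparsity x ≤ D →
        (sparsity x : ℝ) / Δ ≤ g (f x) ∧ g (f x) ≤ Δ * (sparsity x : ℝ)) ↔
    (∀ v₁ v₂ : Fin n → α, 1 ≤ sparsity v₂ → sparsity v₂ ≤ sparsity v₁ →
        sparsity v₁ ≤ D → (sparsity v₁ : ℝ) > Δ ^ 2 * (sparsity v₂ : ℝ) →
        f v₁ ≠ f v₂) := by
  have hΔ0 : (0:ℝ) < Δ := lt_trans one_pos hΔ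
  constructor
  · rintro ⟨g, hg⟩ v₁ v₂ h1 h21 h1D hgt hfeq
    obtain ⟨ha1, ha2⟩ := hg v₁ (le_trans h1 h21) h1D
    obtain ⟨hb1, hb2⟩ := hg v₂ h1 (le_trans h21 h1D)
    rw [hfeq] at ha1
    have : (sparsity v₁ : ℝ) / Δ ≤ Δ * (sparsity v₂ : ℝ) := le_trans ha1 hb2
    have : (sparsity v₁ : ℝ) ≤ Δ ^ 2 * (sparsity v₂ : ℝ) := by
      rw [div_le_iff₀ hΔ0] at this
      calc (sparsity v₁ : ℝ) ≤ Δ * (sparsity v₂ : ℝ) * Δ := this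
        _ = Δ ^ 2 * (sparsity v₂ : ℝ) := by ring
    linarith
  · intro hsep
    classical
    set S : β → Set ℕ := fun b => {d | ∃ x, f x = b ∧ sparsity x = d ∧ 1 ≤ d ∧ d ≤ D}
    refine ⟨fun b => Δ * ((sInf (S b) : ℕ) : ℝ), fun x h1 hD => ?_⟩
    have hmem : sparsity x ∈ S (f x) := ⟨x, rfl, rfl, h1, hD⟩
    set m := sInf (S (f x)) with hm
    have hmmem : m ∈ S (f x) := Nat.sInf_mem ⟨_, hmem⟩
    obtain ⟨y, hfy, hsy, hy1, hyD⟩ := hmmem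
    have hmle : m ≤ sparsity x := Nat.sInf_le hmem
    have hmleR : (m : ℝ) ≤ (sparsity x : ℝ) := Nat.cast_le.mpr hmle
    constructor
    · -- need sparsity x / Δ ≤ Δ * m, i.e. sparsity x ≤ Δ² m
      rw [div_le_iff₀ hΔ0]
      by_contra hcon
      push_neg at hcon
      have hgt : (sparsity x : ℝ) > Δ ^ 2 * (sparsity y : ℝ) := by
        rw [hsy]; nlinarith
      exact hsep x y (hsy ▸ hy1) (hsy ▸ hmle) hD hgt hfy.symm
    · show Δ * (m:ℝ) ≤ Δ * (sparsity x : ℝ)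
      exact mul_le_mul_of_nonneg_left hmleR (le_of_lt hΔ0)
end

section
/- Let Δ > 1 be real and let n, D, ℓ, m be naturals with ℓ ≥ 1, Δ²·(ℓ+1) ≤ D, and D ≤ n/2. If M ∈ F₂^{m×n} satisfies the Δ-approximation condition for bound D, then 2^m ≥ C(n,ℓ) / C(⌊Δ²·ℓ⌋, ℓ), where C(a,b) denotes the binomial coefficient. -/
/-- The group testing output: `(M ⊙ x) i = 1` iff some coordinate `j` tested by row `i`
(`M i j = 1`) is defective (`x j = 1`). -/
def orMul {m n : ℕ} (M : Matrix (Fin m) (Fin n) (ZMod 2)) (x : Fin n → ZMod 2) :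
    Fin m → ZMod 2 :=
  fun i => if ∃ j, M i j = 1 ∧ x j = 1 then 1 else 0

/-- The indicator vector `v(S) ∈ F₂ⁿ` of a subset `S ⊆ [n]`. -/
def indic {n : ℕ} (S : Finset (Fin n)) : Fin n → ZMod 2 :=
  fun j => if j ∈ S then 1 else 0

/-- `M` satisfies the `Δ`-approximation condition for bound `D`: any two defective sets
of size at most `D` whose sizes differ by more than a `Δ²` factor yield distinct outputs. -/
def ApproxCond {m n : ℕ} (M : Matrix (Fin m) (Fin n) (ZMod 2)) (Δ : ℝ) (D : ℕ) : Prop :=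
  ∀ S₁ S₂ : Finset (Fin n), 1 ≤ S₂.card → S₂.card ≤ S₁.card → S₁.card ≤ D →
    (S₁.card : ℝ) > Δ ^ 2 * (S₂.card : ℝ) →
    orMul M (indic S₁) ≠ orMul M (indic S₂)

/-- Helper: `orMul` applied to an indicator, in terms of membership. -/
lemma orMul_indic {m n : ℕ} (M : Matrix (Fin m) (Fin n) (ZMod 2)) (S : Finset (Fin n))
    (i : Fin m) :
    orMul M (indic S) i = if ∃ j, M i j = 1 ∧ j ∈ S then 1 else 0 := by
  unfold orMul indic
  congr 1
  simp only [eq_iff_iff]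
  constructor
  · rintro ⟨j, hj, hj2⟩
    refine ⟨j, hj, ?_⟩
    by_contra h
    simp [h] at hj2
  · rintro ⟨j, hj, hj2⟩
    exact ⟨j, hj, by simp [hj2]⟩

/-- Counting lower bound: if `M ∈ F₂^{m×n}` satisfies the `Δ`-approximation condition
for bound `D` with `ℓ ≥ 1`, `Δ²(ℓ+1) ≤ D ≤ n/2`, then
`2^m ≥ C(n,ℓ) / C(⌊Δ²ℓ⌋, ℓ)`. -/
theorem pool_lb_count {m n D ℓ : ℕ} (Δ : ℝ) (hΔ : 1 < Δ)
    (hℓ : 1 ≤ ℓ) (hℓD : Δ ^ 2 * ((ℓ : ℝ) + 1) ≤ (D : ℝ)) (hDn : (D : ℝ) ≤ (n : ℝ) / 2)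
    (M : Matrix (Fin m) (Fin n) (ZMod 2)) (hM : ApproxCond M Δ D) :
    ((n.choose ℓ : ℝ)) / ((Nat.floor (Δ ^ 2 * (ℓ : ℝ))).choose ℓ : ℝ) ≤ (2 : ℝ) ^ m := by
  classical
  set k := Nat.floor (Δ ^ 2 * (ℓ : ℝ)) with hk
  have hΔ2 : (1 : ℝ) ≤ Δ ^ 2 := by nlinarith
  have hℓk : ℓ ≤ k := Nat.le_floor (by nlinarith : (ℓ : ℝ) ≤ Δ ^ 2 * (ℓ : ℝ))
  have hkpos : 0 < (k.choose ℓ : ℝ) := by exact_mod_cast Nat.choose_pos hℓk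
  rw [div_le_iff₀ hkpos]
  set F : Finset (Fin n) → (Fin m → ZMod 2) := fun S => orMul M (indic S) with hF
  set 𝒮 : Finset (Finset (Fin n)) := Finset.univ.powersetCard ℓ with h𝒮
  have hcard𝒮 : 𝒮.card = n.choose ℓ := by
    simp [h𝒮, Finset.card_powersetCard]
  -- fiber bound
  have fiber_bound : ∀ y : Fin m → ZMod 2,
      (𝒮.filter (fun S => F S = y)).card ≤ k.choose ℓ := by
    intro y
    set fib := 𝒮.filter (fun S => F S = y) with hfib
    rcases fib.eq_empty_or_nonempty with he | hne
    · simp [he]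
    set U : Finset (Fin n) := fib.sup id with hU
    have hmem : ∀ S ∈ fib, S.card = ℓ ∧ F S = y := by
      intro S hS
      rw [hfib, Finset.mem_filter] at hS
      refine ⟨?_, hS.2⟩
      have := hS.1
      rw [h𝒮, Finset.mem_powersetCard] at this
      exact this.2
    have hsubU : ∀ S ∈ fib, S ⊆ U := fun S hS => Finset.le_sup (f := id) hS
    have hUk : U.card ≤ k := by
      by_contra hU'
      push_neg at hU'
      obtain ⟨S, hS⟩ := hne
      obtain ⟨hSℓ, hSy⟩ := hmem S hS
      have hSU : S ⊆ U := hsubU S hS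
      obtain ⟨S₁, hSS₁, hS₁U, hS₁card⟩ :=
        Finset.exists_subsuperset_card_eq hSU (by omega : S.card ≤ k + 1)
          (by omega : k + 1 ≤ U.card)
      have hFy : F S₁ = y := by
        funext i
        have hSi : orMul M (indic S) i = y i := congrFun hSy i
        show orMul M (indic S₁) i = y i
        rw [orMul_indic]
        by_cases hcond : ∃ j, M i j = 1 ∧ j ∈ S₁
        · rw [if_pos hcond]
          obtain ⟨j, hj1, hj2⟩ := hcond
          have hjU : j ∈ U := hS₁U hj2
          rw [hU, Finset.mem_sup] at hjU
          obtain ⟨A, hA, hjA⟩ := hjU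
          obtain ⟨_, hAy⟩ := hmem A hA
          have hA1 : orMul M (indic A) i = 1 := by
            rw [orMul_indic, if_pos ⟨j, hj1, hjA⟩]
          have : y i = 1 := by
            rw [← congrFun hAy i]; exact hA1
          exact this.symm
        · rw [if_neg hcond]
          rw [← hSi, orMul_indic, if_neg]
          rintro ⟨j, hj1, hj2⟩
          exact hcond ⟨j, hj1, hSS₁ hj2⟩
      have h1 : 1 ≤ S.card := by omega
      have h2 : S.card ≤ S₁.card := by omega
      have h3 : S₁.card ≤ D := by
        have hfl : (k : ℝ) ≤ Δ ^ 2 * (ℓ : ℝ) := Nat.floor_le (by positivity)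
        have hcast : ((k + 1 : ℕ) : ℝ) ≤ (D : ℝ) := by push_cast; nlinarith
        have := Nat.cast_le.mp hcast
        omega
      have h4 : (S₁.card : ℝ) > Δ ^ 2 * (S.card : ℝ) := by
        rw [hS₁card, hSℓ]
        push_cast
        have := Nat.lt_floor_add_one (Δ ^ 2 * (ℓ : ℝ))
        rw [← hk] at this
        linarith
      exact hM S₁ S h1 h2 h3 h4 (hFy.trans hSy.symm)
    have hsub : fib ⊆ U.powersetCard ℓ := by
      intro S hS
      rw [Finset.mem_powersetCard]
      exact ⟨hsubU S hS, (hmem S hS).1⟩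
    calc fib.card ≤ (U.powersetCard ℓ).card := Finset.card_le_card hsub
      _ = U.card.choose ℓ := Finset.card_powersetCard ℓ U
      _ ≤ k.choose ℓ := Nat.choose_le_choose ℓ hUk
  have key : n.choose ℓ ≤ 2 ^ m * k.choose ℓ := by
    have hparts := Finset.card_eq_sum_card_fiberwise
      (f := F) (s := 𝒮) (t := Finset.univ) (fun x _ => Finset.mem_univ _)
    calc n.choose ℓ = 𝒮.card := hcard𝒮.symm
      _ = ∑ y : Fin m → ZMod 2, (𝒮.filter fun S => F S = y).card := hparts
      _ ≤ ∑ _y : Fin m → ZMod 2, k.choose ℓ :=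
          Finset.sum_le_sum (fun y _ => fiber_bound y)
      _ = Fintype.card (Fin m → ZMod 2) * k.choose ℓ := by
          rw [Finset.sum_const, Finset.card_univ, smul_eq_mul]
      _ = 2 ^ m * k.choose ℓ := by simp
  calc ((n.choose ℓ : ℕ) : ℝ) ≤ ((2 ^ m * k.choose ℓ : ℕ) : ℝ) := Nat.cast_le.mpr key
    _ = (2 : ℝ) ^ m * (k.choose ℓ : ℝ) := by push_cast; ring
end

section
/- Fix a real Δ > 1 and let c(Δ) = h(1/Δ⁴) − (1/Δ²)·h(1/Δ²), where h(x) = −x·log₂ x − (1−x)·log₂(1−x) is the binary entropy function; note c(Δ) > 0. Then for every ε > 0 there exists N such that for all n ≥ N: if M ∈ F₂^{m×n} satisfies the Δ-approximation condition for bound D = n, then m ≥ (c(Δ) − ε)·n. -/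
/-- The binary entropy function `h(x) = −x·log₂ x − (1−x)·log₂(1−x)`. -/
noncomputable def binEnt (x : ℝ) : ℝ :=
  -x * Real.logb 2 x - (1 - x) * Real.logb 2 (1 - x)


section lemmas
open Finset
-- [maxterm, choose_mul_le_one, orMul_indic_eq_one_iff, counting pasted here]

-- max-term lemma: n^n ≤ (n+1) * (C(n,k) * (k^k * (n-k)^(n-k)))
lemma maxterm (n k : ℕ) (hk : k ≤ n) :
    n ^ n ≤ (n + 1) * (n.choose k * (k ^ k * (n - k) ^ (n - k))) := by
  set t : ℕ → ℕ := fun i => n.choose i * (k ^ i * (n - k) ^ (n - i)) with ht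
  have hsum : ∑ i ∈ range (n + 1), t i = n ^ n := by
    have := add_pow k (n - k) n  -- (k + (n-k))^n = ∑ k^i (n-k)^(n-i) C n i
    rw [Nat.add_sub_cancel' hk] at this
    rw [this]
    apply Finset.sum_congr rfl
    intro i _
    simp only [ht, Nat.cast_id]; ring
  -- step up
  have step_up : ∀ i, i < k → t i ≤ t (i + 1) := by
    intro i hik
    have hin : i < n := lt_of_lt_of_le hik hk
    have key : (i + 1) * t i ≤ (i + 1) * t (i + 1) := by
      have e1 : (i + 1) * t (i + 1) = n.choose i * (k ^ i * (n - k) ^ (n - i - 1)) * ((n - i) * k) := by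
        have h2 : n.choose (i + 1) * (i + 1) = n.choose i * (n - i) := Nat.choose_succ_right_eq n i
        have : (i+1) * t (i+1) = (n.choose (i+1) * (i+1)) * (k ^ i * k * (n - k) ^ (n - (i+1))) := by
          simp only [ht, Nat.cast_id]; ring
        rw [this, h2]
        have : n - (i + 1) = n - i - 1 := by omega
        rw [this]; ring
      have e2 : (i + 1) * t i = n.choose i * (k ^ i * (n - k) ^ (n - i - 1)) * ((i + 1) * (n - k)) := by
        have : (n - k) ^ (n - i) = (n - k) ^ (n - i - 1) * (n - k) := by
          rw [← pow_succ]; congr 1; omega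
        simp only [ht]; rw [this]; ring
      rw [e1, e2]
      apply Nat.mul_le_mul_left
      calc (i + 1) * (n - k) ≤ k * (n - i) := Nat.mul_le_mul (by omega) (by omega)
        _ = (n - i) * k := mul_comm _ _
    exact Nat.le_of_mul_le_mul_left key (Nat.succ_pos i)
  have step_down : ∀ i, k ≤ i → t (i + 1) ≤ t i := by
    intro i hki
    by_cases hin : i < n
    · have key : (i + 1) * t (i + 1) ≤ (i + 1) * t i := by
        have e1 : (i + 1) * t (i + 1) = n.choose i * (k ^ i * (n - k) ^ (n - i - 1)) * ((n - i) * k) := by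
          have h2 : n.choose (i + 1) * (i + 1) = n.choose i * (n - i) := Nat.choose_succ_right_eq n i
          have : (i+1) * t (i+1) = (n.choose (i+1) * (i+1)) * (k ^ i * k * (n - k) ^ (n - (i+1))) := by
            simp only [ht, Nat.cast_id]; ring
          rw [this, h2]
          have : n - (i + 1) = n - i - 1 := by omega
          rw [this]; ring
        have e2 : (i + 1) * t i = n.choose i * (k ^ i * (n - k) ^ (n - i - 1)) * ((i + 1) * (n - k)) := by
          have : (n - k) ^ (n - i) = (n - k) ^ (n - i - 1) * (n - k) := by
            rw [← pow_succ]; congr 1; omega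
          simp only [ht]; rw [this]; ring
        rw [e1, e2]
        apply Nat.mul_le_mul_left
        calc (n - i) * k ≤ (n - k) * (i + 1) := Nat.mul_le_mul (by omega) (by omega)
          _ = (i + 1) * (n - k) := mul_comm _ _
      exact Nat.le_of_mul_le_mul_left key (Nat.succ_pos i)
    · have : n.choose (i + 1) = 0 := Nat.choose_eq_zero_of_lt (by omega)
      simp [ht, this]
  have hmax : ∀ i ∈ range (n + 1), t i ≤ t k := by
    intro i _
    rcases le_or_gt i k with h | h
    · -- upward induction from i to k
      have : ∀ j, i ≤ j → j ≤ k → t i ≤ t j := by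
        intro j
        induction j with
        | zero => intro h1 _; have hi0 : i = 0 := by omega
                  subst hi0; exact le_rfl
        | succ j ih =>
          intro h1 h2
          rcases Nat.lt_or_ge i (j+1) with h3 | h3
          · have := ih (by omega) (by omega)
            exact le_trans this (step_up j (by omega))
          · have : i = j + 1 := by omega
            subst this; exact le_rfl
      exact this k h le_rfl
    · have : ∀ j, k ≤ j → t j ≤ t k := by
        intro j
        induction j with
        | zero => intro h1; have : k = 0 := by omega
                  subst this; exact le_rfl
        | succ j ih =>
          intro h1
          rcases Nat.lt_or_ge k (j+1) with h3 | h3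
          · exact le_trans (step_down j (by omega)) (ih (by omega))
          · have : k = j + 1 := by omega
            subst this; exact le_rfl
      exact this i (le_of_lt h)
  calc n ^ n = ∑ i ∈ range (n + 1), t i := hsum.symm
    _ ≤ (n + 1) * t k := by
        have := Finset.sum_le_card_nsmul (range (n+1)) t (t k) hmax
        simpa [Finset.card_range, smul_eq_mul] using this


lemma choose_mul_le_one {p : ℝ} (hp : 0 ≤ p) (hp1 : p ≤ 1) (u k : ℕ) (hk : k ≤ u) :
    (u.choose k : ℝ) * p ^ k * (1 - p) ^ (u - k) ≤ 1 := by
  have h1 : ∑ i ∈ range (u + 1), p ^ i * (1 - p) ^ (u - i) * (u.choose i : ℝ) = 1 := by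
    have := add_pow p (1 - p) u
    simp only [add_sub_cancel, one_pow] at this
    exact this.symm
  have hmem : k ∈ range (u + 1) := mem_range.2 (by omega)
  have h2 : p ^ k * (1 - p) ^ (u - k) * (u.choose k : ℝ) ≤
      ∑ i ∈ range (u + 1), p ^ i * (1 - p) ^ (u - i) * (u.choose i : ℝ) := by
    apply Finset.single_le_sum (f := fun i => p ^ i * (1 - p) ^ (u - i) * (u.choose i : ℝ)) _ hmem
    intro i _
    have : (0:ℝ) ≤ 1 - p := by linarith
    positivity
  calc (u.choose k : ℝ) * p ^ k * (1 - p) ^ (u - k)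
      = p ^ k * (1 - p) ^ (u - k) * (u.choose k : ℝ) := by ring
    _ ≤ _ := h2
    _ = 1 := h1


lemma orMul_indic_eq_one_iff {m n : ℕ} (M : Matrix (Fin m) (Fin n) (ZMod 2))
    (S : Finset (Fin n)) (i : Fin m) :
    orMul M (indic S) i = 1 ↔ ∃ j, M i j = 1 ∧ j ∈ S := by
  unfold orMul indic
  constructor
  · intro h
    by_cases hc : ∃ j, M i j = 1 ∧ (if j ∈ S then (1 : ZMod 2) else 0) = 1
    · obtain ⟨j, hj1, hj2⟩ := hc
      refine ⟨j, hj1, ?_⟩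
      by_contra hjS
      rw [if_neg hjS] at hj2
      exact zero_ne_one hj2
    · rw [if_neg hc] at h
      exact absurd h.symm one_ne_zero
  · rintro ⟨j, hj1, hjS⟩
    rw [if_pos ⟨j, hj1, by rw [if_pos hjS]⟩]

lemma counting {Δ : ℝ} {m n k : ℕ} (M : Matrix (Fin m) (Fin n) (ZMod 2))
    (hAC : ApproxCond M Δ n) (hk1 : 1 ≤ k) :
    n.choose k ≤ (⌊Δ ^ 2 * (k : ℝ)⌋₊.choose k) * 2 ^ m := by
  classical
  set f : Finset (Fin n) → (Fin m → ZMod 2) := fun S => orMul M (indic S) with hf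
  set s : Finset (Finset (Fin n)) := powersetCard k (univ : Finset (Fin n)) with hs
  have hscard : s.card = n.choose k := by
    rw [hs, card_powersetCard, card_univ, Fintype.card_fin]
  have himg : (s.image f).card ≤ 2 ^ m := by
    calc (s.image f).card ≤ Fintype.card (Fin m → ZMod 2) := Finset.card_le_univ _
      _ = 2 ^ m := by simp [Fintype.card_fun]
  have hfiber : ∀ y ∈ s.image f, (s.filter fun S => f S = y).card ≤ ⌊Δ ^ 2 * (k : ℝ)⌋₊.choose k := by
    intro y hy
    obtain ⟨S₀, hS₀s, hS₀y⟩ := Finset.mem_image.mp hy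
    set T : Finset (Finset (Fin n)) := s.filter (fun S => f S = y) with hT
    have hS₀T : S₀ ∈ T := Finset.mem_filter.2 ⟨hS₀s, hS₀y⟩
    set U : Finset (Fin n) := T.sup id with hU
    have hSU : ∀ S ∈ T, S ⊆ U := fun S hS => Finset.le_sup (f := id) hS
    have hcards : ∀ S ∈ T, S.card = k := by
      intro S hS
      have := Finset.mem_filter.1 hS
      exact (Finset.mem_powersetCard.1 this.1).2
    have hfU : f U = y := by
      funext i
      by_cases hc : ∃ j, M i j = 1 ∧ j ∈ U
      · obtain ⟨j, hj1, hjU⟩ := hc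
        obtain ⟨S, hST, hjS⟩ := Finset.mem_sup.1 hjU
        have h1 : f S i = 1 := (orMul_indic_eq_one_iff M S i).2 ⟨j, hj1, hjS⟩
        have h2 : f U i = 1 := (orMul_indic_eq_one_iff M U i).2 ⟨j, hj1, hjU⟩
        rw [h2, ← (Finset.mem_filter.1 hST).2, h1]
      · have h2 : f U i = 0 := by
          unfold f orMul indic
          rw [if_neg]
          rintro ⟨j, hj1, hj2⟩
          apply hc
          refine ⟨j, hj1, ?_⟩
          by_contra hjU
          rw [if_neg hjU] at hj2
          exact zero_ne_one hj2
        have h3 : y i = 0 := by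
          rw [← hS₀y]
          unfold f orMul indic
          rw [if_neg]
          rintro ⟨j, hj1, hj2⟩
          apply hc
          refine ⟨j, hj1, ?_⟩
          have hjS : j ∈ S₀ := by
            by_contra hjS
            rw [if_neg hjS] at hj2
            exact zero_ne_one hj2
          exact hSU S₀ hS₀T hjS
        rw [h2, h3]
    have hUcard : (U.card : ℝ) ≤ Δ ^ 2 * (k : ℝ) := by
      by_contra h
      push_neg at h
      have hS₀k : S₀.card = k := hcards S₀ hS₀T
      have := hAC U S₀ (by rw [hS₀k]; exact hk1) (Finset.card_le_card (hSU S₀ hS₀T))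
        (le_trans (Finset.card_le_univ U) (by simp)) (by rw [hS₀k]; exact h)
      apply this
      show f U = f S₀
      rw [hfU, ← hS₀y]
    have hUle : U.card ≤ ⌊Δ ^ 2 * (k : ℝ)⌋₊ := Nat.le_floor hUcard
    have hTsub : T ⊆ U.powersetCard k := by
      intro S hS
      exact Finset.mem_powersetCard.2 ⟨hSU S hS, hcards S hS⟩
    calc T.card ≤ (U.powersetCard k).card := Finset.card_le_card hTsub
      _ = U.card.choose k := Finset.card_powersetCard _ _
      _ ≤ ⌊Δ ^ 2 * (k : ℝ)⌋₊.choose k := Nat.choose_le_choose k hUle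
  calc n.choose k = s.card := hscard.symm
    _ ≤ ⌊Δ ^ 2 * (k : ℝ)⌋₊.choose k * (s.image f).card := Finset.card_le_mul_card_image s _ hfiber
    _ ≤ ⌊Δ ^ 2 * (k : ℝ)⌋₊.choose k * 2 ^ m := Nat.mul_le_mul_left _ himg

end lemmas

open Filter Real Topology

/-- With only the trivial bound `D = n` on the number of defectives, any matrix capable of
`Δ`-approximation needs `m ≥ (c(Δ) − ε)·n` rows for large `n`, where
`c(Δ) = h(1/Δ⁴) − (1/Δ²)·h(1/Δ²) > 0`. -/
theorem pool_lb_linear (Δ : ℝ) (hΔ : 1 < Δ) :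
    0 < binEnt (1 / Δ ^ 4) - (1 / Δ ^ 2) * binEnt (1 / Δ ^ 2) ∧
    ∀ ε : ℝ, 0 < ε → ∃ N : ℕ, ∀ n : ℕ, N ≤ n → ∀ m : ℕ,
      ∀ M : Matrix (Fin m) (Fin n) (ZMod 2), ApproxCond M Δ n →
      ((binEnt (1 / Δ ^ 4) - (1 / Δ ^ 2) * binEnt (1 / Δ ^ 2)) - ε) * (n : ℝ) ≤ (m : ℝ) := by
  have hΔ0 : (0:ℝ) < Δ := by linarith
  have hΔ2 : (1:ℝ) < Δ ^ 2 := by nlinarith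
  have hΔ4 : (1:ℝ) < Δ ^ 4 := by nlinarith
  have hp0 : (0:ℝ) < 1 / Δ ^ 2 := by positivity
  have hp1 : 1 / Δ ^ 2 < 1 := by rw [div_lt_one (by positivity)]; exact hΔ2
  have hq0 : (0:ℝ) < 1 - 1 / Δ ^ 2 := by linarith
  have hq1 : 1 - 1 / Δ ^ 2 < 1 := by linarith
  have hl2 : (0:ℝ) < Real.log 2 := Real.log_pos one_lt_two
  have hbinEq : ∀ x : ℝ, binEnt x = Real.binEntropy x / Real.log 2 := by
    intro x
    simp only [binEnt, Real.binEntropy, Real.logb, Real.log_inv]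
    ring
  -- positivity of the constant
  have key : (1 / Δ ^ 2) * Real.binEntropy (1 / Δ ^ 2) < Real.binEntropy (1 / Δ ^ 4) := by
    have hx : (1 / Δ ^ 2) ∈ Set.Icc (0:ℝ) 1 := Set.mem_Icc.mpr ⟨le_of_lt hp0, le_of_lt hp1⟩
    have hy : (0:ℝ) ∈ Set.Icc (0:ℝ) 1 := Set.mem_Icc.mpr ⟨le_refl _, zero_le_one⟩
    have h := Real.strictConcave_binEntropy.2 hx hy (by positivity) hp0 hq0 (by ring)
    have harg : (1 / Δ ^ 2) • (1 / Δ ^ 2) + (1 - 1 / Δ ^ 2) • (0:ℝ) = 1 / Δ ^ 4 := by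
      simp only [smul_eq_mul]; ring
    rw [harg] at h
    simpa [smul_eq_mul, Real.binEntropy_zero] using h
  have hpos : 0 < binEnt (1 / Δ ^ 4) - (1 / Δ ^ 2) * binEnt (1 / Δ ^ 2) := by
    rw [hbinEq, hbinEq]
    rw [show (1 / Δ ^ 2) * (Real.binEntropy (1 / Δ ^ 2) / Real.log 2)
        = ((1 / Δ ^ 2) * Real.binEntropy (1 / Δ ^ 2)) / Real.log 2 by ring, ← sub_div]
    exact div_pos (by linarith) hl2
  refine ⟨hpos, ?_⟩
  intro ε hε
  set c : ℝ := binEnt (1 / Δ ^ 4) - (1 / Δ ^ 2) * binEnt (1 / Δ ^ 2) with hc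
  set r : ℕ → ℝ := fun n => ((⌊(1 / Δ ^ 4) * (n:ℝ)⌋₊ : ℕ) : ℝ) / (n:ℝ) with hr
  set ψ : ℕ → ℝ := fun n => binEnt (r n)
      + (r n) * (Real.logb 2 (1 / Δ ^ 2) + (Δ ^ 2 - 1) * Real.logb 2 (1 - 1 / Δ ^ 2))
      - Real.logb 2 ((n:ℝ) + 1) / (n:ℝ) with hψ
  -- limits
  have hrt : Tendsto r atTop (𝓝 (1 / Δ ^ 4)) :=
    (tendsto_nat_floor_mul_div_atTop (a := 1 / Δ ^ 4) (by positivity)).comp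
      tendsto_natCast_atTop_atTop
  have hcont : Continuous binEnt := by
    have : binEnt = fun x => Real.binEntropy x / Real.log 2 := funext hbinEq
    rw [this]
    exact Real.binEntropy_continuous.div_const _
  have hlogt : Tendsto (fun n : ℕ => Real.logb 2 ((n:ℝ) + 1) / (n:ℝ)) atTop (𝓝 0) := by
    have l1 : Tendsto (fun x : ℝ => Real.log x / x) atTop (𝓝 0) :=
      Real.isLittleO_log_id_atTop.tendsto_div_nhds_zero
    have l2 : Tendsto (fun n : ℕ => (n:ℝ) + 1) atTop atTop :=
      tendsto_atTop_add_const_right _ 1 tendsto_natCast_atTop_atTop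
    have l3 : Tendsto (fun n : ℕ => Real.log ((n:ℝ) + 1) / ((n:ℝ) + 1)) atTop (𝓝 0) := l1.comp l2
    have l4 : Tendsto (fun n : ℕ => ((n:ℝ) + 1) / (n:ℝ)) atTop (𝓝 1) := by
      have : Tendsto (fun n : ℕ => 1 + ((n:ℝ))⁻¹) atTop (𝓝 (1 + 0)) :=
        tendsto_const_nhds.add (tendsto_inv_atTop_zero.comp tendsto_natCast_atTop_atTop)
      rw [add_zero] at this
      refine Tendsto.congr' ?_ this
      filter_upwards [eventually_ge_atTop 1] with n hn
      have hn0 : (n:ℝ) ≠ 0 := Nat.cast_ne_zero.2 (by omega)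
      field_simp
    have l5 : Tendsto (fun n : ℕ => Real.log ((n:ℝ) + 1) / (n:ℝ)) atTop (𝓝 0) := by
      have hml := l3.mul l4
      rw [zero_mul] at hml
      refine Tendsto.congr' ?_ hml
      filter_upwards [eventually_ge_atTop 1] with n hn
      have hn0 : (n:ℝ) ≠ 0 := Nat.cast_ne_zero.2 (by omega)
      have hn1 : (n:ℝ) + 1 ≠ 0 := by positivity
      field_simp
    have := l5.div_const (Real.log 2)
    rw [zero_div] at this
    apply this.congr
    intro n
    simp [Real.logb]
    ring
  have hψt : Tendsto ψ atTop (𝓝 c) := by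
    have h1 : Tendsto (fun n => binEnt (r n)) atTop (𝓝 (binEnt (1 / Δ ^ 4))) :=
      (hcont.tendsto _).comp hrt
    have h2 : Tendsto (fun n => (r n) * (Real.logb 2 (1 / Δ ^ 2) + (Δ ^ 2 - 1) * Real.logb 2 (1 - 1 / Δ ^ 2))) atTop
        (𝓝 ((1 / Δ ^ 4) * (Real.logb 2 (1 / Δ ^ 2) + (Δ ^ 2 - 1) * Real.logb 2 (1 - 1 / Δ ^ 2)))) :=
      hrt.mul_const _
    have h3 := (h1.add h2).sub hlogt
    rw [sub_zero] at h3
    have hlim : binEnt (1 / Δ ^ 4)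
        + (1 / Δ ^ 4) * (Real.logb 2 (1 / Δ ^ 2) + (Δ ^ 2 - 1) * Real.logb 2 (1 - 1 / Δ ^ 2)) = c := by
      rw [hc]
      simp only [binEnt]
      have hΔne : Δ ≠ 0 := ne_of_gt hΔ0
      field_simp
      ring
    rw [← hlim]
    exact h3
  -- eventual facts
  have hev : ∀ᶠ n : ℕ in atTop, (c - ε < ψ n) ∧ 1 ≤ ⌊(1 / Δ ^ 4) * (n:ℝ)⌋₊ ∧ 1 ≤ n := by
    have e1 : ∀ᶠ n : ℕ in atTop, c - ε < ψ n :=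
      hψt.eventually (eventually_gt_nhds (by linarith))
    have e2 : ∀ᶠ n : ℕ in atTop, 1 ≤ ⌊(1 / Δ ^ 4) * (n:ℝ)⌋₊ :=
      (tendsto_nat_floor_mul_atTop (1 / Δ ^ 4) (by positivity)).eventually_ge_atTop 1
    have e3 : ∀ᶠ n : ℕ in atTop, 1 ≤ n := eventually_ge_atTop 1
    filter_upwards [e1, e2, e3] with n h1 h2 h3
    exact ⟨h1, h2, h3⟩
  obtain ⟨N, hN⟩ := eventually_atTop.1 hev
  refine ⟨N, ?_⟩
  intro n hn m M hAC
  obtain ⟨hψn, hk1, hn1⟩ := hN n hn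
  set k : ℕ := ⌊(1 / Δ ^ 4) * (n:ℝ)⌋₊ with hkdef
  have hn0 : (0:ℝ) < (n:ℝ) := by exact_mod_cast hn1
  have hk0 : (0:ℝ) < (k:ℝ) := by exact_mod_cast hk1
  have hkn : k < n := by
    have h1 : (k:ℝ) ≤ (1 / Δ ^ 4) * (n:ℝ) := Nat.floor_le (by positivity)
    have h2 : (1 / Δ ^ 4) * (n:ℝ) < (n:ℝ) := by
      have : 1 / Δ ^ 4 < 1 := by rw [div_lt_one (by positivity)]; exact hΔ4
      nlinarith
    exact_mod_cast lt_of_le_of_lt h1 h2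
  set u : ℕ := ⌊Δ ^ 2 * (k:ℝ)⌋₊ with hudef
  have hku : k ≤ u := Nat.le_floor (by nlinarith)
  have huk : (u:ℝ) ≤ Δ ^ 2 * (k:ℝ) := Nat.floor_le (by positivity)
  -- cast facts
  have hnkc : (((n - k : ℕ)) : ℝ) = (n:ℝ) - (k:ℝ) := Nat.cast_sub (le_of_lt hkn)
  have hukc : (((u - k : ℕ)) : ℝ) = (u:ℝ) - (k:ℝ) := Nat.cast_sub hku
  have hnk0 : (0:ℝ) < (n:ℝ) - (k:ℝ) := by
    have : (k:ℝ) < (n:ℝ) := by exact_mod_cast hkn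
    linarith
  have hkne : (k:ℝ) ≠ 0 := ne_of_gt hk0
  have hnne : (n:ℝ) ≠ 0 := ne_of_gt hn0
  have hnkne : (n:ℝ) - (k:ℝ) ≠ 0 := ne_of_gt hnk0
  have hnne' : (n:ℝ) ≠ 0 := hnne
  have hkne' : (k:ℝ) ≠ 0 := hkne
  have hnkne' : (((n - k : ℕ)):ℝ) ≠ 0 := by rw [hnkc]; exact hnkne
  -- the three inequalities
  have hA : ((n:ℝ)) ^ n ≤ ((n:ℝ) + 1) * ((n.choose k : ℝ) * ((k:ℝ) ^ k * (((n - k : ℕ)):ℝ) ^ (n - k))) := by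
    exact_mod_cast maxterm n k (le_of_lt hkn)
  have hB : ((n.choose k : ℝ)) ≤ (u.choose k : ℝ) * 2 ^ m := by
    exact_mod_cast counting M hAC hk1
  have hC : (u.choose k : ℝ) * (1 / Δ ^ 2) ^ k * (1 - 1 / Δ ^ 2) ^ (u - k) ≤ 1 :=
    choose_mul_le_one (le_of_lt hp0) (le_of_lt hp1) u k hku
  set P : ℝ := (1 / Δ ^ 2) ^ k * (1 - 1 / Δ ^ 2) ^ (u - k) with hP
  have hP0 : 0 < P := by positivity
  set K : ℝ := (k:ℝ) ^ k * (((n - k : ℕ)):ℝ) ^ (n - k) with hK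
  have hK0 : 0 < K := by
    rw [hK]; apply mul_pos (by positivity)
    apply pow_pos; rw [hnkc]; exact hnk0
  have hXY : (n:ℝ) ^ n * P ≤ ((n:ℝ) + 1) * K * 2 ^ m := by
    calc (n:ℝ) ^ n * P
        ≤ (((n:ℝ) + 1) * ((n.choose k : ℝ) * K)) * P :=
          mul_le_mul_of_nonneg_right hA (le_of_lt hP0)
      _ ≤ (((n:ℝ) + 1) * (((u.choose k : ℝ) * 2 ^ m) * K)) * P := by
          apply mul_le_mul_of_nonneg_right _ (le_of_lt hP0)
          apply mul_le_mul_of_nonneg_left _ (by positivity)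
          exact mul_le_mul_of_nonneg_right hB (le_of_lt hK0)
      _ = (((n:ℝ) + 1) * K * 2 ^ m) * ((u.choose k : ℝ) * (1 / Δ ^ 2) ^ k * (1 - 1 / Δ ^ 2) ^ (u - k)) := by
          rw [hP]; ring
      _ ≤ (((n:ℝ) + 1) * K * 2 ^ m) * 1 := by
          apply mul_le_mul_of_nonneg_left hC
          positivity
      _ = ((n:ℝ) + 1) * K * 2 ^ m := by ring
  have hX0 : (0:ℝ) < (n:ℝ) ^ n * P := by positivity
  have hlogle : Real.logb 2 ((n:ℝ) ^ n * P) ≤ Real.logb 2 (((n:ℝ) + 1) * K * 2 ^ m) :=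
    Real.logb_le_logb_of_le one_lt_two hX0 hXY
  have eL : Real.logb 2 ((n:ℝ) ^ n * P)
      = (n:ℝ) * Real.logb 2 (n:ℝ) + ((k:ℝ) * Real.logb 2 (1 / Δ ^ 2)
        + ((u:ℝ) - (k:ℝ)) * Real.logb 2 (1 - 1 / Δ ^ 2)) := by
    rw [hP, Real.logb_mul (pow_ne_zero _ hnne') (by positivity),
      Real.logb_mul (by positivity) (by positivity),
      Real.logb_pow, Real.logb_pow, Real.logb_pow, hukc]
  have eR : Real.logb 2 (((n:ℝ) + 1) * K * 2 ^ m)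
      = Real.logb 2 ((n:ℝ) + 1) + ((k:ℝ) * Real.logb 2 (k:ℝ)
        + ((n:ℝ) - (k:ℝ)) * Real.logb 2 ((n:ℝ) - (k:ℝ))) + (m:ℝ) := by
    have h2m : Real.logb 2 ((2:ℝ) ^ m) = (m:ℝ) := by
      rw [Real.logb_pow, Real.logb_self_eq_one one_lt_two, mul_one]
    rw [Real.logb_mul (mul_ne_zero (by positivity) (ne_of_gt hK0)) (by positivity),
      Real.logb_mul (by positivity) (ne_of_gt hK0), hK,
      Real.logb_mul (pow_ne_zero _ hkne') (pow_ne_zero _ hnkne'),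
      Real.logb_pow, Real.logb_pow, hnkc, h2m]
  have hLq : Real.logb 2 (1 - 1 / Δ ^ 2) < 0 := Real.logb_neg one_lt_two hq0 hq1
  have hterm : (Δ ^ 2 - 1) * ((k:ℝ) * Real.logb 2 (1 - 1 / Δ ^ 2))
      ≤ ((u:ℝ) - (k:ℝ)) * Real.logb 2 (1 - 1 / Δ ^ 2) := by
    rw [show (Δ ^ 2 - 1) * ((k:ℝ) * Real.logb 2 (1 - 1 / Δ ^ 2))
        = ((Δ ^ 2 - 1) * (k:ℝ)) * Real.logb 2 (1 - 1 / Δ ^ 2) by ring]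
    apply mul_le_mul_of_nonpos_right _ (le_of_lt hLq)
    linarith
  -- identity for n * ψ n
  have hrn : r n = (k:ℝ) / (n:ℝ) := rfl
  have hbe : binEnt ((k:ℝ) / (n:ℝ))
      = -((k:ℝ) / (n:ℝ)) * (Real.logb 2 (k:ℝ) - Real.logb 2 (n:ℝ))
        - (((n:ℝ) - (k:ℝ)) / (n:ℝ)) * (Real.logb 2 ((n:ℝ) - (k:ℝ)) - Real.logb 2 (n:ℝ)) := by
    have h1 : (1:ℝ) - (k:ℝ) / (n:ℝ) = ((n:ℝ) - (k:ℝ)) / (n:ℝ) := by field_simp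
    simp only [binEnt]
    rw [h1, Real.logb_div hkne hnne, Real.logb_div hnkne hnne]
  have hψeq : (n:ℝ) * ψ n
      = (n:ℝ) * Real.logb 2 (n:ℝ) - (k:ℝ) * Real.logb 2 (k:ℝ)
        - ((n:ℝ) - (k:ℝ)) * Real.logb 2 ((n:ℝ) - (k:ℝ))
        + (k:ℝ) * Real.logb 2 (1 / Δ ^ 2)
        + (Δ ^ 2 - 1) * ((k:ℝ) * Real.logb 2 (1 - 1 / Δ ^ 2))
        - Real.logb 2 ((n:ℝ) + 1) := by
    rw [hψ]
    simp only
    rw [hrn, hbe]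
    field_simp
    ring
  have main : (n:ℝ) * ψ n ≤ (m:ℝ) := by
    rw [eL, eR] at hlogle
    rw [hψeq]
    linarith
  have step : (c - ε) * (n:ℝ) ≤ ψ n * (n:ℝ) :=
    mul_le_mul_of_nonneg_right (le_of_lt hψn) (le_of_lt hn0)
  calc (c - ε) * (n:ℝ) ≤ ψ n * (n:ℝ) := step
    _ = (n:ℝ) * ψ n := by ring
    _ ≤ (m:ℝ) := main
end

section
/- Let e₀, e₁ be naturals and let x₁, x₂ ∈ F₂^n be vectors such that (x₁, x₂) is (e₀+e₁, e₀+e₁)-close. Then there exists a vector y ∈ F₂^n such that both (x₁, y) and (x₂, y) are (e₀, e₁)-close. -/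
/-!
Let `y` agree with `x₁` and `x₂` wherever they agree. Each of the two disagreement sets
`supp x₁ \ supp x₂` and `supp x₂ \ supp x₁` has at most `e₀ + e₁` elements; on each of them set
`y = 1` on at most `e₀` coordinates and `y = 0` on the remaining ones, of which there are at most
`e₁`. The ones of `y` outside `supp x₁` then lie in the second set (at most `e₀` of them), and the
ones of `x₁` lost by `y` lie in the first (at most `e₁` of them); symmetrically for `x₂`.
-/

/-- The support of a vector over `F₂`: the set of coordinates equal to `1`. -/
def supp {m : ℕ} (u : Fin m → ZMod 2) : Finset (Fin m) :=
  Finset.univ.filter (fun i => u i = 1)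

/-- `(u, w)` is `(e₀,e₁)`-close iff `|supp(w) ∖ supp(u)| ≤ e₀` and
`|supp(u) ∖ supp(w)| ≤ e₁`. -/
def close {m : ℕ} (e₀ e₁ : ℕ) (u w : Fin m → ZMod 2) : Prop :=
  (supp w \ supp u).card ≤ e₀ ∧ (supp u \ supp w).card ≤ e₁

lemma supp_indicator {m : ℕ} (U : Finset (Fin m)) :
    supp (fun i => if i ∈ U then (1 : ZMod 2) else 0) = U := by
  ext i
  by_cases hi : i ∈ U <;> simp [supp, hi]

namespace Finset

variable {α : Type*} [DecidableEq α]

lemma exists_subset_card_le_card_sdiff_le {A : Finset α} {a b : ℕ} (h : #A ≤ a + b) :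
    ∃ S ⊆ A, #S ≤ a ∧ #(A \ S) ≤ b := by
  obtain ⟨S, hSA, hS⟩ := exists_subset_card_eq (min_le_left #A a)
  refine ⟨S, hSA, hS ▸ min_le_right _ _, ?_⟩
  rw [card_sdiff_of_subset hSA, hS]
  omega

variable {P Q S T : Finset α}

lemma inter_union_union_sdiff_left (hS : S ⊆ P) (hT : Disjoint T P) :
    (P ∩ Q ∪ S ∪ T) \ P = T := by
  ext x
  have hSx := @hS x
  have hTx : x ∈ T → x ∉ P := fun h => disjoint_left.1 hT h
  simp only [mem_sdiff, mem_union, mem_inter]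
  tauto

lemma sdiff_inter_union_union (hT : Disjoint T P) :
    P \ (P ∩ Q ∪ S ∪ T) = (P \ Q) \ S := by
  ext x
  have hTx : x ∈ T → x ∉ P := fun h => disjoint_left.1 hT h
  simp only [mem_sdiff, mem_union, mem_inter]
  tauto

theorem exists_close_to_both {e₀ e₁ : ℕ} (hQP : #(Q \ P) ≤ e₀ + e₁) (hPQ : #(P \ Q) ≤ e₀ + e₁) :
    ∃ R : Finset α, (#(R \ P) ≤ e₀ ∧ #(P \ R) ≤ e₁) ∧ (#(R \ Q) ≤ e₀ ∧ #(Q \ R) ≤ e₁) := by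
  obtain ⟨S, hS, hS₀, hS₁⟩ := exists_subset_card_le_card_sdiff_le hPQ
  obtain ⟨T, hT, hT₀, hT₁⟩ := exists_subset_card_le_card_sdiff_le hQP
  rw [subset_sdiff] at hS hT
  refine ⟨P ∩ Q ∪ S ∪ T, ?_, ?_⟩
  · rw [inter_union_union_sdiff_left hS.1 hT.2, sdiff_inter_union_union hT.2]
    exact ⟨hT₀, hS₁⟩
  · rw [inter_comm, union_right_comm, inter_union_union_sdiff_left hT.1 hS.2,
      sdiff_inter_union_union hS.2]
    exact ⟨hS₀, hT₁⟩

end Finset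

/-- If `(x₁, x₂)` are `(e₀+e₁, e₀+e₁)`-close, then there exists a vector `y` such that
both `(x₁, y)` and `(x₂, y)` are `(e₀, e₁)`-close. -/
theorem asymmetric_balls {n : ℕ} (e₀ e₁ : ℕ) (x₁ x₂ : Fin n → ZMod 2)
    (h : close (e₀ + e₁) (e₀ + e₁) x₁ x₂) :
    ∃ y : Fin n → ZMod 2, close e₀ e₁ x₁ y ∧ close e₀ e₁ x₂ y := by
  obtain ⟨R, hR⟩ := Finset.exists_close_to_both h.1 h.2
  refine ⟨fun i => if i ∈ R then 1 else 0, ?_⟩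
  simpa only [close, supp_indicator] using hR
end
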